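/- Let f : ℝ → ℝ be smooth and positive, t₁ ∈ ℝ, and d ≥ 0. The solution of t' = f(t), t(0) = t₁, exists on [0, d] (so that the corresponding lightlike curve reaches a point at spatial distance d) if and only if ∫_{t₁}^{∞} dt/f(t) > d or the solution reaches finite blowup time greater than d; in particular, in the warped spacetime (ℝ × M₀, −dt² + f(t)² g_R) with (M₀, g_R) complete, the future arrival time T₀((t₁,x₁), x₂) is finite if and only if ∫_{t₁}^{∞} dt/f(t) > dist(x₁, x₂). -/
import Mathlib

open Set MeasureTheory intervalIntegral
open scoped ENNReal NNReal

lemma warped_key (f : ℝ → ℝ) (hfc : Continuous f) (hpos : ∀ t, 0 < f t)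
    (t₁ d : ℝ) (hd : 0 ≤ d) :
    (∃ t : ℝ → ℝ, t 0 = t₁ ∧ ∀ s ∈ Set.Icc (0 : ℝ) d, HasDerivAt t (f (t s)) s) ↔
      ENNReal.ofReal d < ∫⁻ u in Set.Ioi t₁, ENNReal.ofReal (1 / f u) := by
  have hne : ∀ u, f u ≠ 0 := fun u => (hpos u).ne'
  have hcont : Continuous (fun u => 1 / f u) := continuous_const.div hfc hne
  set F : ℝ → ℝ := fun x => ∫ u in t₁..x, 1 / f u with hFdef
  have hF : ∀ x, HasStrictDerivAt F (1 / f x) x := fun x =>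
    intervalIntegral.integral_hasStrictDerivAt_right
      (hcont.intervalIntegrable _ _) (hcont.stronglyMeasurableAtFilter _ _)
      hcont.continuousAt
  have hFmono : StrictMono F :=
    strictMono_of_deriv_pos fun x => by
      rw [(hF x).hasDerivAt.deriv]; exact div_pos one_pos (hpos x)
  have hFt₁ : F t₁ = 0 := intervalIntegral.integral_same
  have hkey : ∀ a b : ℝ, a ≤ b →
      (∫⁻ u in Set.Ioc a b, ENNReal.ofReal (1 / f u)) =
        ENNReal.ofReal (∫ u in a..b, 1 / f u) := by
    intro a b hab
    rw [intervalIntegral.integral_of_le hab,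
      MeasureTheory.ofReal_integral_eq_lintegral_ofReal
        (hcont.integrableOn_Ioc)
        (Filter.Eventually.of_forall fun u => (div_pos one_pos (hpos u)).le)]
  constructor
  · rintro ⟨t, ht0, ht⟩
    have hticc : ∀ s ∈ Set.uIcc (0 : ℝ) d, HasDerivAt t (f (t s)) s := by
      rwa [Set.uIcc_of_le hd]
    have htc : ContinuousOn t (Set.uIcc 0 d) := fun s hs =>
      ((hticc s hs).continuousAt).continuousWithinAt
    have hint : IntervalIntegrable (fun s => f (t s)) volume 0 d :=
      (hfc.comp_continuousOn htc).intervalIntegrable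
    have htd : t₁ ≤ t d := by
      have h1 := intervalIntegral.integral_eq_sub_of_hasDerivAt hticc hint
      have h2 : 0 ≤ ∫ s in (0:ℝ)..d, f (t s) :=
        intervalIntegral.integral_nonneg hd fun s _ => (hpos _).le
      rw [h1, ht0] at h2
      linarith
    have hFtd : F (t d) = d := by
      have hG : ∀ s ∈ Set.uIcc (0 : ℝ) d, HasDerivAt (fun s => F (t s)) 1 s := by
        intro s hs
        have := ((hF (t s)).hasDerivAt).comp s (hticc s hs)
        have heq : 1 / f (t s) * f (t s) = 1 := one_div_mul_cancel (hne _)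
        rwa [heq] at this
      have h1 := intervalIntegral.integral_eq_sub_of_hasDerivAt hG
        (intervalIntegrable_const)
      simp only [intervalIntegral.integral_const, smul_eq_mul, mul_one, sub_zero] at h1
      rw [ht0, hFt₁, sub_zero] at h1
      linarith
    have hsplit : (∫⁻ u in Set.Ioi t₁, ENNReal.ofReal (1 / f u)) =
        (∫⁻ u in Set.Ioc t₁ (t d), ENNReal.ofReal (1 / f u)) +
        ∫⁻ u in Set.Ioi (t d), ENNReal.ofReal (1 / f u) := by
      rw [← Set.Ioc_union_Ioi_eq_Ioi htd]
      exact lintegral_union measurableSet_Ioi Set.Ioc_disjoint_Ioi_same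
    have hpos2 : 0 < ∫⁻ u in Set.Ioi (t d), ENNReal.ofReal (1 / f u) := by
      have hle : (∫⁻ u in Set.Ioc (t d) (t d + 1), ENNReal.ofReal (1 / f u)) ≤
          ∫⁻ u in Set.Ioi (t d), ENNReal.ofReal (1 / f u) :=
        lintegral_mono_set Set.Ioc_subset_Ioi_self
      have h3 : 0 < ∫ u in (t d)..(t d + 1), 1 / f u :=
        intervalIntegral.intervalIntegral_pos_of_pos
          (hcont.intervalIntegrable _ _) (fun u => div_pos one_pos (hpos u)) (by linarith)
      calc (0 : ℝ≥0∞) < ENNReal.ofReal (∫ u in (t d)..(t d + 1), 1 / f u) :=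
            ENNReal.ofReal_pos.mpr h3
        _ = _ := (hkey _ _ (by linarith)).symm
        _ ≤ _ := hle
    have hFtd' : (∫ u in t₁..(t d), 1 / f u) = d := hFtd
    rw [hsplit, hkey _ _ htd, hFtd']
    exact ENNReal.lt_add_right ENNReal.ofReal_ne_top hpos2.ne'
  · intro h
    have hUnion : Set.Ioi t₁ = ⋃ n : ℕ, Set.Ioc t₁ (t₁ + n) := by
      ext x
      simp only [Set.mem_Ioi, Set.mem_iUnion, Set.mem_Ioc]
      constructor
      · intro hx
        exact ⟨⌈x - t₁⌉₊, hx, by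
          have := Nat.le_ceil (x - t₁); linarith⟩
      · rintro ⟨n, hn, -⟩; exact hn
    set g₀ : ℝ → ℝ≥0∞ := fun u => ENNReal.ofReal (1 / f u) with hg₀
    have hg₀m : Measurable g₀ := (hcont.measurable).ennreal_ofReal
    set ν := volume.withDensity g₀ with hν
    have hνeq : ∀ s : Set ℝ, MeasurableSet s → ν s = ∫⁻ u in s, g₀ u :=
      fun s hs => withDensity_apply g₀ hs
    have hsup : (∫⁻ u in Set.Ioi t₁, g₀ u) = ⨆ n : ℕ, ∫⁻ u in Set.Ioc t₁ (t₁ + n), g₀ u := by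
      rw [← hνeq _ measurableSet_Ioi, hUnion]
      have hmon : Monotone (fun n : ℕ => Set.Ioc t₁ (t₁ + (n : ℝ))) := fun m n h =>
        Set.Ioc_subset_Ioc_right (by
          have : (m : ℝ) ≤ (n : ℝ) := Nat.cast_le.mpr h
          linarith)
      rw [hmon.directed_le.measure_iUnion]
      exact iSup_congr fun n => hνeq _ measurableSet_Ioc
    rw [hsup] at h
    obtain ⟨n, hn⟩ := lt_iSup_iff.mp h
    have hT : d < F (t₁ + n) := by
      rw [hkey t₁ (t₁ + n) (le_add_of_nonneg_right n.cast_nonneg)] at hn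
      exact (ENNReal.ofReal_lt_ofReal_iff_of_nonneg hd).mp hn
    set T : ℝ := t₁ + n with hT'
    have ht₁T : t₁ - 1 ≤ T := by
      by_contra hc
      push_neg at hc
      have := hFmono (show T < t₁ by linarith)
      rw [hFt₁] at this
      linarith
    have hFcont : ContinuousOn F (Set.Icc (t₁ - 1) T) :=
      fun x _ => ((hF x).hasDerivAt.continuousAt).continuousWithinAt
    have hsurj : ∀ s ∈ Set.Icc (0 : ℝ) d, ∃ x, F x = s := by
      intro s hs
      have h1 : F (t₁ - 1) < 0 := by
        have := hFmono (show t₁ - 1 < t₁ by linarith); linarith [hFt₁]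
      have hmem : s ∈ Set.Icc (F (t₁ - 1)) (F T) :=
        ⟨by linarith [hs.1], by linarith [hs.2]⟩
      obtain ⟨x, -, hx⟩ := intermediate_value_Icc ht₁T hFcont hmem
      exact ⟨x, hx⟩
    have hFinj := hFmono.injective
    set g : ℝ → ℝ := Function.invFun F with hg
    have hgF : ∀ x, g (F x) = x := Function.leftInverse_invFun hFinj
    refine ⟨g, ?_, ?_⟩
    · rw [← hFt₁, hgF]
    · intro s hs
      obtain ⟨x, hx⟩ := hsurj s hs
      have hx' : g s = x := by rw [← hx, hgF]
      have hds : HasStrictDerivAt g ((1 / f x)⁻¹) (F x) :=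
        (hF x).to_local_left_inverse (one_div_ne_zero (hne x)) (Filter.Eventually.of_forall hgF)
      rw [hx] at hds
      have : HasDerivAt g ((1 / f x)⁻¹) s := hds.hasDerivAt
      rw [one_div, inv_inv, ← hx'] at this
      exact this




/-- In the warped product spacetime `(ℝ × M₀, −dt² + f(t)² g_R)` with `(M₀, g_R)`
complete (encoded via its Riemannian distance `dist`), lightlike curves over a
unit-speed spatial curve are governed by the ODE `t'(s) = f(t(s))`. The solution
with `t(0) = t₁` exists on `[0, d]` if and only if `∫_{t₁}^∞ dt/f(t) > d`; in
particular, for a causal relation `rel` characterized by lightlike lifts of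
minimizing spatial curves, the future arrival time `T₀((t₁,x₁), x₂)` is finite
(i.e. `(t₁,x₁) ≤ (t₂,x₂)` for some `t₂`) iff `∫_{t₁}^∞ dt/f(t) > dist(x₁,x₂)`. -/
theorem warped_arrival_time_finite_iff {M₀ : Type*} [MetricSpace M₀] [CompleteSpace M₀]
    (f : ℝ → ℝ) (hf : ContDiff ℝ (⊤ : ℕ∞) f) (hpos : ∀ t, 0 < f t)
    (t₁ : ℝ) (d : ℝ) (hd : 0 ≤ d)
    (rel : ℝ × M₀ → ℝ × M₀ → Prop)
    (hrel : ∀ (ta tb : ℝ) (xa xb : M₀), rel (ta, xa) (tb, xb) ↔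
      ∃ t : ℝ → ℝ, t 0 = ta ∧ t (dist xa xb) ≤ tb ∧
        ∀ s ∈ Set.Icc (0 : ℝ) (dist xa xb), HasDerivAt t (f (t s)) s)
    (x₁ x₂ : M₀) :
    ((∃ t : ℝ → ℝ, t 0 = t₁ ∧ ∀ s ∈ Set.Icc (0 : ℝ) d, HasDerivAt t (f (t s)) s) ↔
      ENNReal.ofReal d < ∫⁻ u in Set.Ioi t₁, ENNReal.ofReal (1 / f u)) ∧
    ((∃ t₂ : ℝ, rel (t₁, x₁) (t₂, x₂)) ↔
      ENNReal.ofReal (dist x₁ x₂) < ∫⁻ u in Set.Ioi t₁, ENNReal.ofReal (1 / f u)) := by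
  have hfc : Continuous f := hf.continuous
  refine ⟨warped_key f hfc hpos t₁ d hd, ?_⟩
  constructor
  · rintro ⟨t₂, h2⟩
    rw [hrel] at h2
    obtain ⟨t, ht0, -, ht⟩ := h2
    exact (warped_key f hfc hpos t₁ (dist x₁ x₂) dist_nonneg).mp ⟨t, ht0, ht⟩
  · intro h
    obtain ⟨t, ht0, ht⟩ := (warped_key f hfc hpos t₁ (dist x₁ x₂) dist_nonneg).mpr h
    exact ⟨t (dist x₁ x₂), (hrel t₁ (t (dist x₁ x₂)) x₁ x₂).mpr ⟨t, ht0, le_rfl, ht⟩⟩
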